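/- arXiv:1811.05373 — 2 statements merged into one kernel-verified Lean document; each statement's English description precedes it below -/
import Mathlib

section
/- Let (M, τ) be a tracial W*-probability space (a von Neumann algebra with faithful normal tracial state), let (x_1,…,x_n) and (y_1,…,y_n) be self-adjoint elements, and for 1 ≤ i ≤ n set z_i = x_1 + ⋯ + x_i + y_{i+1} + ⋯ + y_n and z_i⁰ = x_1 + ⋯ + x_{i−1} + y_{i+1} + ⋯ + y_n. Then for any z ∈ ℂ⁺, |τ[G_{z_n}(z)] − τ[G_{z_0}(z)]| ≤ ∑_{i=1}^n (|P_i| + |Q_i| + |R_i|), where P_i = τ[G_{z_i⁰}(z)(x_i − y_i)G_{z_i⁰}(z)], Q_i = τ[G_{z_i⁰}(z)x_i G_{z_i⁰}(z)x_i G_{z_i⁰}(z)] − τ[G_{z_i⁰}(z)y_i G_{z_i⁰}(z)y_i G_{z_i⁰}(z)], and R_i = τ[G_{z_i}(z)(x_i G_{z_i⁰}(z))³] − τ[G_{z_{i−1}}(z)(y_i G_{z_i⁰}(z))³]. -/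
/-- The resolvent `G_a(z) = (z·1 − a)⁻¹`. -/
noncomputable def cauchyResolvent {A : Type*} [Ring A] [Algebra ℂ A] (z : ℂ) (a : A) : A :=
  Ring.inverse (z • (1 : A) - a)

/-!
Since `Z i = Z0 i + x i` and `Z (i - 1) = Z0 i + y i`, the left-hand side telescopes into the
increments `τ G_{Z0 i + x i} − τ G_{Z0 i + y i}`. Iterating the resolvent identity
`G_{a+b} = G_a + G_{a+b} b G_a` three times expands `G_{a+b}` to second order in `b` with an
exact third-order remainder, so each increment is exactly `P i + Q i + R i`. All resolvents
exist because self-adjoint elements have real spectrum and `z ∉ ℝ`.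
-/

section Resolvent

variable {A : Type*} [Ring A] [Algebra ℂ A] {z : ℂ}

theorem cauchyResolvent_add_eq {a b : A} (ha : IsUnit (z • (1 : A) - a))
    (hab : IsUnit (z • (1 : A) - (a + b))) :
    cauchyResolvent z (a + b) =
      cauchyResolvent z a + cauchyResolvent z (a + b) * b * cauchyResolvent z a := by
  have hG₀ : (z • (1 : A) - a) * cauchyResolvent z a = 1 := Ring.mul_inverse_cancel _ ha
  have hG : cauchyResolvent z (a + b) * (z • (1 : A) - (a + b)) = 1 :=
    Ring.inverse_mul_cancel _ hab
  calc cauchyResolvent z (a + b)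
      = cauchyResolvent z (a + b) * ((z • (1 : A) - a) * cauchyResolvent z a) := by
        rw [hG₀, mul_one]
    _ = cauchyResolvent z (a + b) * (z • (1 : A) - (a + b)) * cauchyResolvent z a
          + cauchyResolvent z (a + b) * b * cauchyResolvent z a := by noncomm_ring
    _ = _ := by rw [hG, one_mul]

theorem cauchyResolvent_add_expansion {a b : A} (ha : IsUnit (z • (1 : A) - a))
    (hab : IsUnit (z • (1 : A) - (a + b))) :
    cauchyResolvent z (a + b) =
      cauchyResolvent z a + cauchyResolvent z a * b * cauchyResolvent z a
        + cauchyResolvent z a * b * cauchyResolvent z a * b * cauchyResolvent z a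
        + cauchyResolvent z (a + b) * (b * cauchyResolvent z a) ^ 3 := by
  conv_lhs => rw [cauchyResolvent_add_eq ha hab, cauchyResolvent_add_eq ha hab,
    cauchyResolvent_add_eq ha hab]
  noncomm_ring

theorem norm_map_cauchyResolvent_add_sub_add_le {E F : Type*} [SeminormedAddCommGroup E]
    [FunLike F A E] [AddMonoidHomClass F A E] (τ : F) {a b c : A}
    (ha : IsUnit (z • (1 : A) - a)) (hab : IsUnit (z • (1 : A) - (a + b)))
    (hac : IsUnit (z • (1 : A) - (a + c))) :
    ‖τ (cauchyResolvent z (a + b)) - τ (cauchyResolvent z (a + c))‖ ≤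
      ‖τ (cauchyResolvent z a * (b - c) * cauchyResolvent z a)‖
        + ‖τ (cauchyResolvent z a * b * cauchyResolvent z a * b * cauchyResolvent z a)
            - τ (cauchyResolvent z a * c * cauchyResolvent z a * c * cauchyResolvent z a)‖
        + ‖τ (cauchyResolvent z (a + b) * (b * cauchyResolvent z a) ^ 3)
            - τ (cauchyResolvent z (a + c) * (c * cauchyResolvent z a) ^ 3)‖ := by
  refine le_of_eq_of_le (congrArg norm ?_) (norm_add₃_le ..)
  conv_lhs => rw [cauchyResolvent_add_expansion ha hab, cauchyResolvent_add_expansion ha hac]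
  simp only [mul_sub, sub_mul, map_add, map_sub]
  abel

end Resolvent

theorem isUnit_smul_one_sub_of_isSelfAdjoint {A : Type*} [NormedRing A] [StarRing A]
    [CStarRing A] [NormedAlgebra ℂ A] [CompleteSpace A] [StarModule ℂ A] {a : A}
    (ha : IsSelfAdjoint a) {z : ℂ} (hz : z.im ≠ 0) : IsUnit (z • (1 : A) - a) := by
  let _ : CStarAlgebra A := { }
  have hz_mem : z ∉ spectrum ℂ a := fun h ↦ hz (by rw [ha.mem_spectrum_eq_re h]; rfl)
  simpa [Algebra.algebraMap_eq_smul_one] using spectrum.notMem_iff.mp hz_mem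

section

open Finset

theorem norm_sub_le_sum_Icc_of_norm_sub_le {E : Type*} [SeminormedAddCommGroup E]
    {f : ℕ → E} {g : ℕ → ℝ} {n : ℕ} (h : ∀ i ∈ Icc 1 n, ‖f i - f (i - 1)‖ ≤ g i) :
    ‖f n - f 0‖ ≤ ∑ i ∈ Icc 1 n, g i := by
  induction n with
  | zero => simp
  | succ n ih =>
    rw [sum_Icc_succ_top (by omega)]
    calc ‖f (n + 1) - f 0‖ ≤ ‖f (n + 1) - f n‖ + ‖f n - f 0‖ :=
          norm_sub_le_norm_sub_add_norm_sub ..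
      _ ≤ g (n + 1) + ∑ i ∈ Icc 1 n, g i :=
        add_le_add (h (n + 1) (right_mem_Icc.mpr (by omega)))
          (ih fun i hi ↦ h i (Icc_subset_Icc_right n.le_succ hi))
      _ = ∑ i ∈ Icc 1 n, g i + g (n + 1) := add_comm ..

theorem sum_Icc_one_eq_sum_Icc_one_sub_one_add {M : Type*} [AddCommMonoid M] (f : ℕ → M)
    {i : ℕ} (hi : 1 ≤ i) : ∑ j ∈ Icc 1 i, f j = ∑ j ∈ Icc 1 (i - 1), f j + f i := by
  obtain ⟨k, rfl⟩ := Nat.exists_eq_add_of_le' hi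
  exact sum_Icc_succ_top (by omega) f

theorem sum_Icc_eq_add_sum_Icc_add_one {M : Type*} [AddCommMonoid M] (f : ℕ → M)
    {i n : ℕ} (hin : i ≤ n) : ∑ j ∈ Icc i n, f j = f i + ∑ j ∈ Icc (i + 1) n, f j := by
  rw [Icc_add_one_left_eq_Ioc, add_sum_Ioc_eq_sum_Icc hin]

end

open Finset in
theorem lindeberg_method_general {A : Type*} [NormedRing A] [StarRing A] [CStarRing A]
    [NormedAlgebra ℂ A] [CompleteSpace A] [StarModule ℂ A]
    (τ : A →ₗ[ℂ] ℂ)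
    (n : ℕ) (x y : ℕ → A)
    (hx : ∀ i ∈ Icc 1 n, IsSelfAdjoint (x i)) (hy : ∀ i ∈ Icc 1 n, IsSelfAdjoint (y i))
    (z : ℂ) (hz : 0 < z.im)
    -- `Z i = x₁ + ⋯ + x_i + y_{i+1} + ⋯ + y_n`
    (Z : ℕ → A) (hZ : ∀ i, Z i = (∑ j ∈ Icc 1 i, x j) + ∑ j ∈ Icc (i + 1) n, y j)
    -- `Z0 i = x₁ + ⋯ + x_{i-1} + y_{i+1} + ⋯ + y_n`
    (Z0 : ℕ → A) (hZ0 : ∀ i, Z0 i = (∑ j ∈ Icc 1 (i - 1), x j) + ∑ j ∈ Icc (i + 1) n, y j) :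
    norm (τ (cauchyResolvent z (Z n)) - τ (cauchyResolvent z (Z 0)))
      ≤ ∑ i ∈ Icc 1 n,
          (norm (τ (cauchyResolvent z (Z0 i) * (x i - y i) * cauchyResolvent z (Z0 i)))
          + norm
              (τ (cauchyResolvent z (Z0 i) * x i * cauchyResolvent z (Z0 i) * x i * cauchyResolvent z (Z0 i))
              - τ (cauchyResolvent z (Z0 i) * y i * cauchyResolvent z (Z0 i) * y i * cauchyResolvent z (Z0 i)))
          + norm
              (τ (cauchyResolvent z (Z i) * (x i * cauchyResolvent z (Z0 i)) ^ 3)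
              - τ (cauchyResolvent z (Z (i - 1)) * (y i * cauchyResolvent z (Z0 i)) ^ 3))) := by
  refine norm_sub_le_sum_Icc_of_norm_sub_le (f := fun i ↦ τ (cauchyResolvent z (Z i)))
    fun i hi ↦ ?_
  obtain ⟨hi1, hin⟩ := mem_Icc.mp hi
  have hZ_x : Z i = Z0 i + x i := by
    rw [hZ, hZ0, sum_Icc_one_eq_sum_Icc_one_sub_one_add x hi1]; abel
  have hZ_y : Z (i - 1) = Z0 i + y i := by
    rw [hZ, hZ0, Nat.sub_add_cancel hi1, sum_Icc_eq_add_sum_Icc_add_one y hin]; abel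
  have hZ0_sa : IsSelfAdjoint (Z0 i) := by
    rw [hZ0]
    refine .add (isSelfAdjoint_sum _ fun j hj ↦ hx j ?_) (isSelfAdjoint_sum _ fun j hj ↦ hy j ?_)
    all_goals simp only [mem_Icc] at hj ⊢; omega
  have isUnit_of_sa {a : A} (ha : IsSelfAdjoint a) : IsUnit (z • (1 : A) - a) :=
    isUnit_smul_one_sub_of_isSelfAdjoint ha hz.ne'
  rw [hZ_x, hZ_y]
  exact norm_map_cauchyResolvent_add_sub_add_le τ (isUnit_of_sa hZ0_sa)
    (isUnit_of_sa (hZ0_sa.add (hx i hi))) (isUnit_of_sa (hZ0_sa.add (hy i hi)))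

open Finset in
/-- The noncommutative Lindeberg method for Cauchy transforms in a tracial
`W*`-probability space `(M, τ)`. -/
theorem lindeberg_method {A : Type*} [NormedRing A] [StarRing A] [CStarRing A]
    [NormedAlgebra ℂ A] [CompleteSpace A] [StarModule ℂ A]
    (τ : A →ₗ[ℂ] ℂ) (hτ1 : τ 1 = 1)
    (htrace : ∀ a b : A, τ (a * b) = τ (b * a))
    (hpos : ∀ a : A, 0 ≤ (τ (star a * a)).re) (hreal : ∀ a : A, (τ (star a * a)).im = 0)
    (hfaithful : ∀ a : A, τ (star a * a) = 0 → a = 0)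
    (n : ℕ) (x y : ℕ → A)
    (hx : ∀ i ∈ Icc 1 n, IsSelfAdjoint (x i)) (hy : ∀ i ∈ Icc 1 n, IsSelfAdjoint (y i))
    (z : ℂ) (hz : 0 < z.im)
    -- `Z i = x₁ + ⋯ + x_i + y_{i+1} + ⋯ + y_n`
    (Z : ℕ → A) (hZ : ∀ i, Z i = (∑ j ∈ Icc 1 i, x j) + ∑ j ∈ Icc (i + 1) n, y j)
    -- `Z0 i = x₁ + ⋯ + x_{i-1} + y_{i+1} + ⋯ + y_n`
    (Z0 : ℕ → A) (hZ0 : ∀ i, Z0 i = (∑ j ∈ Icc 1 (i - 1), x j) + ∑ j ∈ Icc (i + 1) n, y j) :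
    norm (τ (cauchyResolvent z (Z n)) - τ (cauchyResolvent z (Z 0)))
      ≤ ∑ i ∈ Icc 1 n,
          (norm (τ (cauchyResolvent z (Z0 i) * (x i - y i) * cauchyResolvent z (Z0 i)))
          + norm
              (τ (cauchyResolvent z (Z0 i) * x i * cauchyResolvent z (Z0 i) * x i * cauchyResolvent z (Z0 i))
              - τ (cauchyResolvent z (Z0 i) * y i * cauchyResolvent z (Z0 i) * y i * cauchyResolvent z (Z0 i)))
          + norm
              (τ (cauchyResolvent z (Z i) * (x i * cauchyResolvent z (Z0 i)) ^ 3)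
              - τ (cauchyResolvent z (Z (i - 1)) * (y i * cauchyResolvent z (Z0 i)) ^ 3))) :=
  lindeberg_method_general τ n x y hx hy z hz Z hZ Z0 hZ0
end

section
/- Let (M, τ) be a tracial W*-probability space and B a von Neumann subalgebra. Let x, y be self-adjoint, each free from a self-adjoint element w with amalgamation over B, with E[x|B] = E[y|B] = 0 and E[xbx|B] = E[yby|B] for all b ∈ B. Then for all z ∈ ℂ⁺, τ[G_w(z) x G_w(z) x G_w(z)] = τ[G_w(z) y G_w(z) y G_w(z)]. -/
/-- `E` is a `τ`-preserving conditional expectation onto the subalgebra `B`. -/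
def IsCondExp {A : Type*} [Ring A] [Algebra ℂ A] (τ : A →ₗ[ℂ] ℂ)
    (B : Subalgebra ℂ A) (E : A →ₗ[ℂ] A) : Prop :=
  (∀ a : A, E a ∈ B) ∧ (∀ b ∈ B, E b = b) ∧ (∀ a : A, τ (E a) = τ a) ∧
    (∀ a : A, ∀ b₁ ∈ B, ∀ b₂ ∈ B, E (b₁ * a * b₂) = b₁ * E a * b₂)

/-- Freeness with amalgamation (with respect to the conditional expectation `E`) of a
family of subalgebras: alternating products of `E`-centered elements are `E`-centered. -/
def FreeAmalgFamily {A : Type*} [Ring A] [Algebra ℂ A] {ι : Type*}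
    (E : A →ₗ[ℂ] A) (Malg : ι → Subalgebra ℂ A) : Prop :=
  ∀ (m : ℕ), 2 ≤ m → ∀ (a : ℕ → A) (κ : ℕ → ι),
    (∀ i < m, E (a i) = 0) → (∀ i < m, a i ∈ Malg (κ i)) →
    (∀ i, i + 1 < m → κ i ≠ κ (i + 1)) →
    E (((List.range m).map a).prod) = 0

/-! By traciality `τ[G x G x G] = τ[G² x G x]`, and `τ = τ ∘ E`. Splitting each element `g` of the
algebra of `w` as `E g + (g - E g)`, freeness with amalgamation kills every term of `E[G² x G x]`
containing a centred part, so that `E[G² x G x] = E[G²] E[x E[G] x]`. This depends on `x` only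
through `b ↦ E[x b x]`, which is the same for `x` and `y`. -/

namespace FreeAmalgFamily

variable {A : Type*} [Ring A] [Algebra ℂ A] {ι : Type*} {E : A →ₗ[ℂ] A}
  {M : ι → Subalgebra ℂ A}

theorem map_prod_eq_zero (hfree : FreeAmalgFamily E M) (l : List (A × ι))
    (hlen : 2 ≤ l.length) (hcent : ∀ p ∈ l, E p.1 = 0) (hmem : ∀ p ∈ l, p.1 ∈ M p.2)
    (halt : l.IsChain fun p q => p.2 ≠ q.2) :
    E (l.map Prod.fst).prod = 0 := by
  let pad : A × ι := (0, (l[0]'(by omega)).2)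
  have hrange : (List.range l.length).map (fun i => (l.getD i pad).1) = l.map Prod.fst :=
    List.ext_getElem (by simp) fun i _ hi => by
      simp [List.getElem?_eq_getElem (List.length_map Prod.fst ▸ hi)]
  rw [← hrange]
  refine hfree l.length hlen _ (fun i => (l.getD i pad).2) (fun i hi => ?_) (fun i hi => ?_)
    (fun i hi => ?_)
  · simpa [List.getElem?_eq_getElem hi] using hcent _ (List.getElem_mem hi)
  · simpa [List.getElem?_eq_getElem hi] using hmem _ (List.getElem_mem hi)
  · simpa [List.getElem?_eq_getElem hi, List.getElem?_eq_getElem (Nat.lt_of_succ_lt hi)]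
      using List.isChain_iff_getElem.mp halt i hi

variable (hfree : FreeAmalgFamily E M) {i j : ι} (hij : i ≠ j)
include hfree hij

theorem map_mul_eq_zero {a b : A} (ha : a ∈ M j) (hb : b ∈ M i) (hEa : E a = 0)
    (hEb : E b = 0) : E (a * b) = 0 := by
  simpa using hfree.map_prod_eq_zero [(a, j), (b, i)] le_rfl (by simp [hEa, hEb])
    (by simp [ha, hb]) (by simp [hij.symm])

theorem map_mul_mul_eq_zero {a b : A} (ha : a ∈ M i) (hb : b ∈ M j) (hEa : E a = 0)
    (hEb : E b = 0) : E (a * b * a) = 0 := by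
  simpa [mul_assoc] using hfree.map_prod_eq_zero [(a, i), (b, j), (a, i)] (by simp)
    (by simp [hEa, hEb]) (by simp [ha, hb]) (by simp [hij, hij.symm])

theorem map_mul_mul_mul_eq_zero {a b c : A} (ha : a ∈ M i) (hb : b ∈ M j) (hc : c ∈ M j)
    (hEa : E a = 0) (hEb : E b = 0) (hEc : E c = 0) : E (c * a * b * a) = 0 := by
  simpa [mul_assoc] using hfree.map_prod_eq_zero [(c, j), (a, i), (b, j), (a, i)] (by simp)
    (by simp [hEa, hEb, hEc]) (by simp [ha, hb, hc]) (by simp [hij, hij.symm])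

end FreeAmalgFamily

namespace IsCondExp

variable {A : Type*} [Ring A] [Algebra ℂ A] {τ : A →ₗ[ℂ] ℂ} {B : Subalgebra ℂ A}
  {E : A →ₗ[ℂ] A}

theorem map_mem (hE : IsCondExp τ B E) (a : A) : E a ∈ B := hE.1 a

theorem map_of_mem (hE : IsCondExp τ B E) {b : A} (hb : b ∈ B) : E b = b := hE.2.1 b hb

theorem trace_map (hE : IsCondExp τ B E) (a : A) : τ (E a) = τ a := hE.2.2.1 a

theorem map_mul_left (hE : IsCondExp τ B E) {b : A} (hb : b ∈ B) (a : A) :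
    E (b * a) = b * E a := by
  simpa using hE.2.2.2 a b hb 1 B.one_mem

theorem map_mul_right (hE : IsCondExp τ B E) {b : A} (hb : b ∈ B) (a : A) :
    E (a * b) = E a * b := by
  simpa using hE.2.2.2 a 1 B.one_mem b hb

theorem map_sub_map_self (hE : IsCondExp τ B E) (a : A) : E (a - E a) = 0 := by
  rw [map_sub, hE.map_of_mem (hE.map_mem a), sub_self]

variable {ι : Type*} {M : ι → Subalgebra ℂ A} {i j : ι}

theorem map_mul_eq_zero_of_free (hE : IsCondExp τ B E) (hfree : FreeAmalgFamily E M)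
    (hij : i ≠ j) (hBi : B ≤ M i) {c a : A} (hc : c ∈ M j) (hEc : E c = 0) (ha : a ∈ M i) :
    E (c * a) = 0 := by
  have hsplit : c * a = c * E a + c * (a - E a) := by noncomm_ring
  have hcentered : E (c * (a - E a)) = 0 :=
    hfree.map_mul_eq_zero hij hc (sub_mem ha (hBi (hE.map_mem a))) hEc (hE.map_sub_map_self a)
  rw [hsplit, map_add, hE.map_mul_right (hE.map_mem a), hEc, zero_mul, hcentered, add_zero]

theorem map_mul_mul_mul_mul_of_free (hE : IsCondExp τ B E) (hfree : FreeAmalgFamily E M)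
    (hij : i ≠ j) (hBi : B ≤ M i) (hBj : B ≤ M j) {x g₁ g₂ : A} (hx : x ∈ M i)
    (hEx : E x = 0) (hg₁ : g₁ ∈ M j) (hg₂ : g₂ ∈ M j) :
    E (g₁ * x * g₂ * x) = E g₁ * E (x * E g₂ * x) := by
  set b₁ := E g₁
  set b₂ := E g₂
  have hb₁ : b₁ ∈ B := hE.map_mem g₁
  have hb₂ : b₂ ∈ B := hE.map_mem g₂
  have hc₁ : g₁ - b₁ ∈ M j := sub_mem hg₁ (hBj hb₁)
  have hc₂ : g₂ - b₂ ∈ M j := sub_mem hg₂ (hBj hb₂)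
  have hbb : E (b₁ * x * b₂ * x) = b₁ * E (x * b₂ * x) := by
    simpa only [mul_assoc] using hE.map_mul_left hb₁ (x * b₂ * x)
  have hbc : E (b₁ * x * (g₂ - b₂) * x) = 0 := by
    rw [mul_assoc, mul_assoc, ← mul_assoc x, hE.map_mul_left hb₁,
      hfree.map_mul_mul_eq_zero hij hx hc₂ hEx (hE.map_sub_map_self g₂), mul_zero]
  have hcb : E ((g₁ - b₁) * x * b₂ * x) = 0 := by
    rw [mul_assoc, mul_assoc, ← mul_assoc x]
    exact hE.map_mul_eq_zero_of_free hfree hij hBi hc₁ (hE.map_sub_map_self g₁)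
      (mul_mem (mul_mem hx (hBi hb₂)) hx)
  have hcc : E ((g₁ - b₁) * x * (g₂ - b₂) * x) = 0 :=
    hfree.map_mul_mul_mul_eq_zero hij hx hc₂ hc₁ hEx (hE.map_sub_map_self g₂)
      (hE.map_sub_map_self g₁)
  calc E (g₁ * x * g₂ * x)
      = E (b₁ * x * b₂ * x) + E (b₁ * x * (g₂ - b₂) * x) + E ((g₁ - b₁) * x * b₂ * x)
          + E ((g₁ - b₁) * x * (g₂ - b₂) * x) := by
        simp only [← map_add]
        congr 1
        noncomm_ring
    _ = b₁ * E (x * b₂ * x) := by rw [hbb, hbc, hcb, hcc, add_zero, add_zero, add_zero]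

theorem trace_mul_mul_mul_mul_mul_of_free (hE : IsCondExp τ B E)
    (htrace : ∀ a b : A, τ (a * b) = τ (b * a)) (hfree : FreeAmalgFamily E M)
    (hij : i ≠ j) (hBi : B ≤ M i) (hBj : B ≤ M j) {x g : A} (hx : x ∈ M i)
    (hEx : E x = 0) (hg : g ∈ M j) :
    τ (g * x * g * x * g) = τ (E (g * g) * E (x * E g * x)) := by
  rw [← hE.map_mul_mul_mul_mul_of_free hfree hij hBi hBj hx hEx (mul_mem hg hg) hg,
    hE.trace_map, htrace]
  simp only [mul_assoc]

end IsCondExp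

theorem trace_resolvent_second_order_match_general {A : Type*} [NormedRing A]
    [NormedAlgebra ℂ A]
    (τ : A →ₗ[ℂ] ℂ)
    (htrace : ∀ a b : A, τ (a * b) = τ (b * a))
    (B Sx Sy T : Subalgebra ℂ A) (hBSx : B ≤ Sx) (hBSy : B ≤ Sy) (hBT : B ≤ T)
    (E : A →ₗ[ℂ] A) (hE : IsCondExp τ B E)
    (hfreex : FreeAmalgFamily E (fun b : Bool => if b then Sx else T))
    (hfreey : FreeAmalgFamily E (fun b : Bool => if b then Sy else T))
    (x y w : A)
    (hxS : x ∈ Sx) (hyS : y ∈ Sy)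
    (hEx : E x = 0) (hEy : E y = 0)
    (hsecond : ∀ b ∈ B, E (x * b * x) = E (y * b * y))
    (z : ℂ) (hres : cauchyResolvent z w ∈ T) :
    τ (cauchyResolvent z w * x * cauchyResolvent z w * x * cauchyResolvent z w)
      = τ (cauchyResolvent z w * y * cauchyResolvent z w * y * cauchyResolvent z w) := by
  rw [hE.trace_mul_mul_mul_mul_mul_of_free htrace hfreex (i := true) (j := false) nofun hBSx
      hBT hxS hEx hres,
    hE.trace_mul_mul_mul_mul_mul_of_free htrace hfreey (i := true) (j := false) nofun hBSy
      hBT hyS hEy hres,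
    hsecond _ (hE.map_mem _)]

/-- If `x, y` are `B`-centered, each free from `w` with amalgamation over `B`, and have
matching `B`-valued second moments, then the second-order Lindeberg terms agree:
`τ[G_w x G_w x G_w] = τ[G_w y G_w y G_w]` for every `z ∈ ℂ⁺`. -/
theorem trace_resolvent_second_order_match {A : Type*} [NormedRing A] [StarRing A]
    [CStarRing A] [NormedAlgebra ℂ A] [CompleteSpace A] [StarModule ℂ A]
    (τ : A →ₗ[ℂ] ℂ) (hτ1 : τ 1 = 1)
    (htrace : ∀ a b : A, τ (a * b) = τ (b * a))
    (hpos : ∀ a : A, 0 ≤ (τ (star a * a)).re) (hreal : ∀ a : A, (τ (star a * a)).im = 0)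
    (hfaithful : ∀ a : A, τ (star a * a) = 0 → a = 0)
    (B Sx Sy T : Subalgebra ℂ A) (hBSx : B ≤ Sx) (hBSy : B ≤ Sy) (hBT : B ≤ T)
    (E : A →ₗ[ℂ] A) (hE : IsCondExp τ B E)
    (hfreex : FreeAmalgFamily E (fun b : Bool => if b then Sx else T))
    (hfreey : FreeAmalgFamily E (fun b : Bool => if b then Sy else T))
    (x y w : A) (hx : IsSelfAdjoint x) (hy : IsSelfAdjoint y) (hw : IsSelfAdjoint w)
    (hxS : x ∈ Sx) (hyS : y ∈ Sy) (hwT : w ∈ T)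
    (hEx : E x = 0) (hEy : E y = 0)
    (hsecond : ∀ b ∈ B, E (x * b * x) = E (y * b * y))
    (z : ℂ) (hz : 0 < z.im) (hres : cauchyResolvent z w ∈ T) :
    τ (cauchyResolvent z w * x * cauchyResolvent z w * x * cauchyResolvent z w)
      = τ (cauchyResolvent z w * y * cauchyResolvent z w * y * cauchyResolvent z w) :=
  trace_resolvent_second_order_match_general τ htrace B Sx Sy T hBSx hBSy hBT E hE hfreex hfreey x y
    w hxS hyS hEx hEy hsecond z hres
end
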